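/- Fix 1 ≤ k ≤ r. There exist a constant c > 0 and n₀ such that for all n ≥ n₀ and every maximal intersecting family 𝒜 ⊆ [n]^(r), at least one of the following holds: (i) |𝒜⟨k⟩| ≤ (α^(r−k+1) − 1)·C(n,k−1) + c·n^(k−2); or (ii) there exists a set D ∈ [n]^(k−1) such that the family 𝒞 = {A∖D : A ∈ 𝒜, D ⊆ A} ⊆ [n]^(r−k+1) satisfies |𝒞⟨1⟩| = α^(r−k+1) and ℬ = {B ∈ [n]^(r) : there exists C ∈ 𝒞 with C ⊆ B} is contained in 𝒜. -/

import Mathlib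

open Finset

/-- The ground set `[n] = {1, …, n}`. -/
def grd (n : ℕ) : Finset ℕ := Finset.Icc 1 n

/-- `[n]^(k)`: all `k`-element subsets of `[n]`. -/
def ksets (n k : ℕ) : Finset (Finset ℕ) := (grd n).powersetCard k

/-- A family of sets is intersecting if any two of its members meet. -/
def IsIntersecting (𝒜 : Finset (Finset ℕ)) : Prop :=
  ∀ A ∈ 𝒜, ∀ B ∈ 𝒜, (A ∩ B).Nonempty

/-- `𝒜⟨k⟩`: the collection of `k`-sets arising as pairwise intersections of members of `𝒜`. -/
def interk (𝒜 : Finset (Finset ℕ)) (k : ℕ) : Finset (Finset ℕ) :=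
  ((𝒜 ×ˢ 𝒜).image fun p => p.1 ∩ p.2).filter fun C => C.card = k

/-- `𝒜⟨1⟩` identified with a set of points: all `x` with `{x} = A ∩ B` for some `A, B ∈ 𝒜`. -/
def interPts (𝒜 : Finset (Finset ℕ)) : Finset ℕ :=
  (interk 𝒜 1).sup id

/-- `β(n,r,k)`: the maximum of `|𝒜⟨k⟩|` over intersecting families `𝒜 ⊆ [n]^(r)`. -/
noncomputable def beta (n r k : ℕ) : ℕ :=
  sSup {m | ∃ 𝒜 ⊆ ksets n r, IsIntersecting 𝒜 ∧ (interk 𝒜 k).card = m}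

/-- `α^(r) = max {β(n,r,1) : n ≥ r}` (finite by Lovász's theorem). -/
noncomputable def alpha (r : ℕ) : ℕ :=
  sSup {m | ∃ n, r ≤ n ∧ beta n r 1 = m}

/-!
A `k`-intersection `C` either contains a `(k - 1)`-set `D ∉ I(𝒜)`, or all of its `(k - 1)`-subsets
are intersections (`C` is saturated). In the first case `C \ D` is a singleton intersection of the
link `{A \ D : D ⊆ A ∈ 𝒜}`, which is an intersecting family of `(r - k + 1)`-sets because
`D ∉ I(𝒜)`; so by Lovász's theorem (via the Erdős–Rado sunflower lemma) each such `D` accounts for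
at most `α^(r-k+1)` of them. Induction on `k` gives `|𝒜⟨k⟩| = O(n^(k-1))` and only `O(n^(k-2))`
saturated `k`-intersections. If the link of `D` attains `α^(r-k+1)` but some `r`-set `B` containing
a member `A \ D` of it is missing from `𝒜`, maximality gives `A' ∈ 𝒜` disjoint from `B`, and then
`A' ∩ A` is a nonempty intersection inside `D`; only `O(n^(k-2))` sets `D` contain one. All other
`D` account for at most `α^(r-k+1) - 1` intersections each.
-/

section Sunflower

variable {α : Type*} [DecidableEq α]

def IsSunflower (S : Finset (Finset α)) (Y : Finset α) : Prop :=
  ∀ U ∈ S, ∀ V ∈ S, U ≠ V → U ∩ V = Y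

theorem exists_pairwiseDisjoint_or_exists_transversal {F : Finset (Finset α)} {b : ℕ}
    (hF : ∀ U ∈ F, #U ≤ b) (hne : ∀ U ∈ F, U.Nonempty) (m : ℕ) :
    (∃ S ⊆ F, #S = m + 1 ∧ (S : Set (Finset α)).PairwiseDisjoint id) ∨
      ∃ V : Finset α, #V ≤ m * b ∧ ∀ U ∈ F, (U ∩ V).Nonempty := by
  classical
  set 𝒟 := F.powerset.filter fun M : Finset (Finset α) => (M : Set (Finset α)).PairwiseDisjoint id
  obtain ⟨M, hM, hMmax⟩ := 𝒟.exists_max_image card ⟨∅, by simp [𝒟]⟩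
  obtain ⟨hMF, hMdisj⟩ : M ⊆ F ∧ (M : Set (Finset α)).PairwiseDisjoint id := by simpa [𝒟] using hM
  by_cases hMcard : m + 1 ≤ #M
  · obtain ⟨S, hSM, hS⟩ := exists_subset_card_eq hMcard
    exact Or.inl ⟨S, hSM.trans hMF, hS, hMdisj.subset (by simpa using hSM)⟩
  refine Or.inr ⟨M.biUnion id, ?_, fun U hU => ?_⟩
  · calc #(M.biUnion id) ≤ ∑ U ∈ M, #U := card_biUnion_le
      _ ≤ ∑ _U ∈ M, b := sum_le_sum fun U hU => hF U (hMF hU)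
      _ ≤ m * b := by rw [sum_const, smul_eq_mul]; exact Nat.mul_le_mul_right _ (by omega)
  by_contra hUM
  rw [not_nonempty_iff_eq_empty, ← disjoint_iff_inter_eq_empty, disjoint_biUnion_right] at hUM
  have hUnotM : U ∉ M := fun h => (hne U hU).ne_empty (disjoint_self.1 (hUM U h))
  have hins : insert U M ∈ 𝒟 := by
    simp only [𝒟, mem_filter, mem_powerset, coe_insert]
    exact ⟨insert_subset hU hMF, hMdisj.insert fun V hV _ => hUM V hV⟩
  have := hMmax _ hins
  rw [card_insert_of_notMem hUnotM] at this
  omega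

theorem exists_lt_card_filter_mem_of_transversal {F : Finset (Finset α)} {V : Finset α} {N : ℕ}
    (hV : ∀ U ∈ F, (U ∩ V).Nonempty) (hF : #V * N < #F) : ∃ v ∈ V, N < #{U ∈ F | v ∈ U} := by
  by_contra! h
  have hsum : #F ≤ ∑ U ∈ F, #(V ∩ U) := by
    rw [card_eq_sum_ones]
    exact sum_le_sum fun U hU => card_pos.2 (inter_comm U V ▸ hV U hU)
  exact hF.not_ge (hsum.trans (sum_card_inter_le h))

/-- The Erdős–Rado sunflower lemma. -/
theorem exists_isSunflower (b m : ℕ) {F : Finset (Finset α)} (hF : ∀ U ∈ F, #U = b)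
    (hcard : b.factorial * m ^ b < #F) : ∃ S ⊆ F, #S = m + 1 ∧ ∃ Y, IsSunflower S Y := by
  induction b generalizing F with
  | zero =>
    have : F ⊆ {∅} := fun U hU => mem_singleton.2 (card_eq_zero.1 (hF U hU))
    have := card_le_card this
    rw [card_singleton] at this
    simp at hcard
    omega
  | succ b ih =>
    rcases exists_pairwiseDisjoint_or_exists_transversal (fun U hU => (hF U hU).le)
      (fun U hU => card_pos.1 (by rw [hF U hU]; omega)) m with ⟨S, hSF, hS, hdisj⟩ | ⟨V, hV, hmeet⟩
    · exact ⟨S, hSF, hS, ∅, fun U hU W hW hUW => disjoint_iff_inter_eq_empty.1 (hdisj hU hW hUW)⟩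
    have hVF : #V * (b.factorial * m ^ b) < #F :=
      calc #V * (b.factorial * m ^ b) ≤ m * (b + 1) * (b.factorial * m ^ b) :=
            Nat.mul_le_mul_right _ hV
        _ = (b + 1).factorial * m ^ (b + 1) := by rw [Nat.factorial_succ]; ring
        _ < #F := hcard
    obtain ⟨v, -, hv⟩ := exists_lt_card_filter_mem_of_transversal hmeet hVF
    set Fv := F.filter fun U => v ∈ U
    have hinj : Set.InjOn (·.erase v) (Fv : Set (Finset α)) :=
      (erase_injOn' v).mono fun U hU => (mem_filter.1 hU).2
    obtain ⟨S, hSG, hS, Y, hY⟩ := ih (F := Fv.image (·.erase v))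
      (by
        simp only [mem_image, forall_exists_index, and_imp, forall_apply_eq_imp_iff₂]
        intro U hU
        rw [card_erase_of_mem (mem_filter.1 hU).2, hF U (mem_filter.1 hU).1]
        rfl)
      (by rwa [card_image_of_injOn hinj])
    have hvS : ∀ W ∈ S, v ∉ W := fun W hW => by
      obtain ⟨U, -, rfl⟩ := mem_image.1 (hSG hW)
      exact notMem_erase v U
    refine ⟨S.image (insert v), fun U hU => ?_, ?_, insert v Y, fun U hU W hW hUW => ?_⟩
    · obtain ⟨W, hW, rfl⟩ := mem_image.1 hU
      obtain ⟨U', hU', rfl⟩ := mem_image.1 (hSG hW)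
      rw [insert_erase (mem_filter.1 hU').2]
      exact (mem_filter.1 hU').1
    · rw [card_image_of_injOn fun X hX Z hZ h => ?_, hS]
      rw [← erase_insert (hvS X hX), ← erase_insert (hvS Z hZ)]
      exact congrArg (·.erase v) h
    · obtain ⟨X, hX, rfl⟩ := mem_image.1 hU
      obtain ⟨Z, hZ, rfl⟩ := mem_image.1 hW
      rw [← insert_inter_distrib, hY X hX Z hZ fun h => hUW (h ▸ rfl)]

theorem eq_of_inter_eq_of_card_eq_one {C C' Y : Finset α} (hC : #C = 1) (hC' : #C' = 1)
    (h : C ∩ Y = C' ∩ Y) (hne : (C ∩ Y).Nonempty) : C = C' := by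
  have key : ∀ {D : Finset α}, #D = 1 → (D ∩ Y).Nonempty → D ∩ Y = D := fun hD hDY =>
    eq_of_subset_of_card_le inter_subset_left (hD ▸ card_pos.2 hDY)
  rw [← key hC hne, ← key hC' (h ▸ hne), h]

theorem inter_eq_inter_of_traces_eq {A B A' B' Y : Finset α} (hsub : A ∩ B' ⊆ Y)
    (hA : A ∩ Y = A' ∩ Y) (hB : B ∩ Y = B' ∩ Y) (hAB : #(A ∩ B) = 1) (hA'B' : #(A' ∩ B') = 1)
    (hne : (A ∩ B').Nonempty) : A ∩ B = A' ∩ B' := by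
  have e1 : A ∩ B' = (A ∩ B) ∩ Y := by
    rw [inter_inter_distrib_right, hB, ← inter_inter_distrib_right, inter_eq_left.2 hsub]
  have e2 : A ∩ B' = (A' ∩ B') ∩ Y := by
    rw [inter_inter_distrib_right, ← hA, ← inter_inter_distrib_right, inter_eq_left.2 hsub]
  exact eq_of_inter_eq_of_card_eq_one hAB hA'B' (e1.symm.trans e2) (e1 ▸ hne)

theorem card_le_four_pow_mul_card_image_union {Q : Finset (Finset α × Finset α)} {b : ℕ}
    (hQ : ∀ q ∈ Q, #(q.1 ∪ q.2) = b) : #Q ≤ 4 ^ b * #(Q.image fun q => q.1 ∪ q.2) := by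
  refine card_le_mul_card_image Q _ fun U hU => ?_
  obtain ⟨q₀, hq₀, rfl⟩ := mem_image.1 hU
  calc #{q ∈ Q | q.1 ∪ q.2 = q₀.1 ∪ q₀.2}
      ≤ #((q₀.1 ∪ q₀.2).powerset ×ˢ (q₀.1 ∪ q₀.2).powerset) := by
        refine card_le_card fun q hq => ?_
        rw [← (mem_filter.1 hq).2, mem_product, mem_powerset, mem_powerset]
        exact ⟨subset_union_left, subset_union_right⟩
    _ = 4 ^ b := by rw [card_product, card_powerset, hQ q₀ hq₀, ← mul_pow]; norm_num

/-- Lovász's argument: the unions `A ∪ B` are `(2s - 1)`-sets, so if there are many of them they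
contain a large sunflower with kernel `Y`, and two petals whose pairs have the same traces on `Y`
come from the same pair. -/
theorem exists_card_le_of_crossIntersecting (s : ℕ) :
    ∃ L : ℕ, ∀ Q : Finset (Finset α × Finset α), (∀ q ∈ Q, #q.1 = s ∧ #q.2 = s) →
      (∀ q ∈ Q, #(q.1 ∩ q.2) = 1) → Set.InjOn (fun q : Finset α × Finset α => q.1 ∩ q.2) Q →
      (∀ q ∈ Q, ∀ q' ∈ Q, (q.1 ∩ q'.2).Nonempty) → #Q ≤ L := by
  set b := 2 * s - 1
  refine ⟨4 ^ b * (b.factorial * (4 ^ b) ^ b), fun Q hcard hsingle hinj hcross => ?_⟩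
  have hunion : ∀ q ∈ Q, #(q.1 ∪ q.2) = b := fun q hq => by
    have := card_union_add_card_inter q.1 q.2
    rw [hsingle q hq, (hcard q hq).1, (hcard q hq).2] at this
    omega
  set W := Q.image fun q => q.1 ∪ q.2
  have hW : ∀ U ∈ W, #U = b := by
    simp only [W, mem_image]
    rintro U ⟨q, hq, rfl⟩
    exact hunion q hq
  by_contra! hQ
  obtain ⟨S, hSW, hS, Y, hY⟩ := exists_isSunflower b (4 ^ b) hW
    (Nat.lt_of_mul_lt_mul_left (hQ.trans_le (card_le_four_pow_mul_card_image_union hunion)))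
  have hpre : ∀ U ∈ W, ∃ q ∈ Q, q.1 ∪ q.2 = U := fun U hU => by simpa [W] using hU
  choose! g hgQ hgU using hpre
  have hYb : #Y ≤ b := by
    obtain ⟨U, hU, V, hV, hUV⟩ :=
      one_lt_card.1 (by rw [hS]; exact Nat.lt_add_of_pos_left (by positivity))
    rw [← hY U hU V hV hUV, ← hW U (hSW hU)]
    exact card_le_card inter_subset_left
  have htraces : #(Y.powerset ×ˢ Y.powerset) < #S :=
    calc #(Y.powerset ×ˢ Y.powerset) = 4 ^ #Y := by
          rw [card_product, card_powerset, ← mul_pow]; norm_num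
      _ < #S := by rw [hS]; exact Nat.lt_succ_of_le (Nat.pow_le_pow_right (by norm_num) hYb)
  obtain ⟨U, hU, V, hV, hUV, htrace⟩ := exists_ne_map_eq_of_card_lt_of_maps_to htraces
    (f := fun U => ((g U).1 ∩ Y, (g U).2 ∩ Y)) (fun U _ => by simp)
  have hgU' := hgQ U (hSW hU)
  have hgV' := hgQ V (hSW hV)
  have hsub : (g U).1 ∩ (g V).2 ⊆ Y := by
    have := inter_subset_inter (subset_union_left : (g U).1 ⊆ (g U).1 ∪ (g U).2)
      (subset_union_right : (g V).2 ⊆ (g V).1 ∪ (g V).2)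
    rwa [hgU U (hSW hU), hgU V (hSW hV), hY U hU V hV hUV] at this
  obtain ⟨htr1, htr2⟩ := Prod.mk.inj htrace
  apply hUV
  rw [← hgU U (hSW hU), ← hgU V (hSW hV), hinj hgU' hgV' (inter_eq_inter_of_traces_eq hsub htr1 htr2
    (hsingle _ hgU') (hsingle _ hgV') (hcross _ hgU' _ hgV'))]

end Sunflower

section Families

variable {n r s : ℕ} {𝒜 : Finset (Finset ℕ)}

theorem mem_ksets {k : ℕ} {A : Finset ℕ} : A ∈ ksets n k ↔ A ⊆ grd n ∧ #A = k :=
  mem_powersetCard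

theorem card_ksets (n k : ℕ) : #(ksets n k) = n.choose k := by simp [ksets, grd]

theorem ksets_mono {m : ℕ} (h : n ≤ m) (k : ℕ) : ksets n k ⊆ ksets m k :=
  powersetCard_mono (Icc_subset_Icc_right h)

/-- The intersection structure `I(𝒜)`. -/
def intersections (𝒜 : Finset (Finset ℕ)) : Finset (Finset ℕ) :=
  (𝒜 ×ˢ 𝒜).image fun p => p.1 ∩ p.2

theorem mem_intersections {C : Finset ℕ} :
    C ∈ intersections 𝒜 ↔ ∃ A ∈ 𝒜, ∃ B ∈ 𝒜, A ∩ B = C := by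
  simp only [intersections, mem_image, mem_product, Prod.exists, and_assoc, exists_and_left]

theorem mem_interk {k : ℕ} {C : Finset ℕ} : C ∈ interk 𝒜 k ↔ C ∈ intersections 𝒜 ∧ #C = k :=
  mem_filter

theorem interk_subset_ksets (h𝒜 : 𝒜 ⊆ ksets n r) (k : ℕ) : interk 𝒜 k ⊆ ksets n k := by
  intro C hC
  obtain ⟨hCI, hCk⟩ := mem_interk.1 hC
  obtain ⟨A, hA, B, -, rfl⟩ := mem_intersections.1 hCI
  exact mem_ksets.2 ⟨inter_subset_left.trans (mem_ksets.1 (h𝒜 hA)).1, hCk⟩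

theorem card_interPts (𝒜 : Finset (Finset ℕ)) : #(interPts 𝒜) = #(interk 𝒜 1) := by
  have hsingle : ∀ C ∈ interk 𝒜 1, #C = 1 := fun C hC => (mem_interk.1 hC).2
  rw [interPts, sup_eq_biUnion, card_biUnion fun C hC D hD hCD => ?_]
  · exact (sum_congr rfl hsingle).trans (by simp)
  obtain ⟨x, rfl⟩ := card_eq_one.1 (hsingle C hC)
  obtain ⟨y, rfl⟩ := card_eq_one.1 (hsingle D hD)
  exact disjoint_singleton.2 fun h => hCD (h ▸ rfl)

theorem exists_card_interk_one_le (s : ℕ) :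
    ∃ L : ℕ, ∀ 𝒜 : Finset (Finset ℕ), (∀ A ∈ 𝒜, #A = s) → IsIntersecting 𝒜 →
      #(interk 𝒜 1) ≤ L := by
  obtain ⟨L, hL⟩ := exists_card_le_of_crossIntersecting (α := ℕ) s
  refine ⟨L, fun 𝒜 h𝒜 hint => ?_⟩
  obtain ⟨Q, hQ, hinj, hQimage⟩ := exists_subset_injOn_image_eq_of_surjOn
    (f := fun p : Finset ℕ × Finset ℕ => p.1 ∩ p.2) (↑(𝒜 ×ˢ 𝒜)) (interk 𝒜 1) fun C hC => by
      obtain ⟨A, hA, B, hB, rfl⟩ := mem_intersections.1 (mem_interk.1 hC).1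
      exact ⟨(A, B), mem_coe.2 (mem_product.2 ⟨hA, hB⟩), rfl⟩
  have hQ' : ∀ q ∈ Q, q.1 ∈ 𝒜 ∧ q.2 ∈ 𝒜 := fun q hq => mem_product.1 (hQ hq)
  rw [← hQimage, card_image_of_injOn hinj]
  refine hL Q (fun q hq => ⟨h𝒜 _ (hQ' q hq).1, h𝒜 _ (hQ' q hq).2⟩) (fun q hq => ?_) hinj
    fun q hq q' hq' => hint _ (hQ' q hq).1 _ (hQ' q' hq').2
  exact (mem_interk.1 (hQimage ▸ mem_image_of_mem _ hq)).2

theorem card_interk_le_beta (h𝒜 : 𝒜 ⊆ ksets n r) (hint : IsIntersecting 𝒜) (k : ℕ) :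
    #(interk 𝒜 k) ≤ beta n r k := by
  refine le_csSup ⟨2 ^ n, ?_⟩ ⟨𝒜, h𝒜, hint, rfl⟩
  rintro _ ⟨ℬ, hℬ, -, rfl⟩
  calc #(interk ℬ k) ≤ #(ksets n k) := card_le_card (interk_subset_ksets hℬ k)
    _ ≤ 2 ^ n := card_ksets n k ▸ Nat.choose_le_two_pow n k

theorem bddAbove_beta_one (s : ℕ) : BddAbove {m | ∃ n, s ≤ n ∧ beta n s 1 = m} := by
  obtain ⟨L, hL⟩ := exists_card_interk_one_le s
  refine ⟨L, ?_⟩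
  rintro _ ⟨n, -, rfl⟩
  refine csSup_le ⟨0, ∅, empty_subset _, by simp [IsIntersecting], by simp [interk]⟩ ?_
  rintro _ ⟨𝒜, h𝒜, hint, rfl⟩
  exact hL 𝒜 (fun A hA => (mem_ksets.1 (h𝒜 hA)).2) hint

theorem card_interk_one_le_alpha (h𝒜 : 𝒜 ⊆ ksets n s) (hint : IsIntersecting 𝒜) :
    #(interk 𝒜 1) ≤ alpha s :=
  (card_interk_le_beta (h𝒜.trans (ksets_mono (le_max_left n s) s)) hint 1).trans
    (le_csSup (bddAbove_beta_one s) ⟨max n s, le_max_right n s, rfl⟩)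

theorem one_le_alpha (hs : 1 ≤ s) : 1 ≤ alpha s := by
  set A := Icc 1 s
  set B := Icc s (2 * s - 1)
  have hAB : A ∩ B = {s} := by ext x; simp [A, B]; omega
  have hsub : {A, B} ⊆ ksets (2 * s) s := by
    simp only [insert_subset_iff, singleton_subset_iff, mem_ksets, grd, A, B, Nat.card_Icc]
    refine ⟨⟨Icc_subset_Icc_right (by omega), by omega⟩, Icc_subset_Icc hs (by omega), by omega⟩
  have hint : IsIntersecting {A, B} := by
    have hsAB : ∀ X ∈ ({A, B} : Finset (Finset ℕ)), s ∈ X := by simp [A, B]; omega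
    exact fun X hX Y hY => ⟨s, mem_inter.2 ⟨hsAB X hX, hsAB Y hY⟩⟩
  have hmem : {s} ∈ interk {A, B} 1 :=
    mem_interk.2 ⟨mem_intersections.2 ⟨A, by simp, B, by simp, hAB⟩, card_singleton s⟩
  exact (card_pos.2 ⟨_, hmem⟩).trans_le (card_interk_one_le_alpha hsub hint)

end Families

section Links

variable {n r : ℕ} {𝒜 : Finset (Finset ℕ)}

def link (𝒜 : Finset (Finset ℕ)) (D : Finset ℕ) : Finset (Finset ℕ) :=
  (𝒜.filter fun A => D ⊆ A).image fun A => A \ D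

theorem mem_link {D C : Finset ℕ} : C ∈ link 𝒜 D ↔ ∃ A ∈ 𝒜, D ⊆ A ∧ A \ D = C := by
  simp [link, and_assoc]

theorem link_subset_ksets (h𝒜 : 𝒜 ⊆ ksets n r) (D : Finset ℕ) : link 𝒜 D ⊆ ksets n (r - #D) := by
  intro C hC
  obtain ⟨A, hA, hDA, rfl⟩ := mem_link.1 hC
  obtain ⟨hAn, hAr⟩ := mem_ksets.1 (h𝒜 hA)
  exact mem_ksets.2 ⟨sdiff_subset.trans hAn, by rw [card_sdiff_of_subset hDA, hAr]⟩

theorem isIntersecting_link {D : Finset ℕ} (hD : D ∉ intersections 𝒜) :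
    IsIntersecting (link 𝒜 D) := by
  intro C hC C' hC'
  obtain ⟨A, hA, hDA, rfl⟩ := mem_link.1 hC
  obtain ⟨B, hB, hDB, rfl⟩ := mem_link.1 hC'
  rw [show A \ D ∩ (B \ D) = (A ∩ B) \ D from inf_sdiff.symm, sdiff_nonempty]
  exact fun hAB => hD (mem_intersections.2 ⟨A, hA, B, hB, hAB.antisymm (subset_inter hDA hDB)⟩)

theorem card_interk_link_le_alpha (h𝒜 : 𝒜 ⊆ ksets n r) {D : Finset ℕ}
    (hD : D ∉ intersections 𝒜) : #(interk (link 𝒜 D) 1) ≤ alpha (r - #D) :=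
  card_interk_one_le_alpha (link_subset_ksets h𝒜 D) (isIntersecting_link hD)

theorem card_filter_superset_interk_le {D : Finset ℕ} {t : ℕ} (hD : #D + 1 = t) :
    #{C ∈ interk 𝒜 t | D ⊆ C} ≤ #(interk (link 𝒜 D) 1) := by
  refine card_le_card_of_injOn (· \ D) (fun C hC => ?_)
    ((superset_injOn_sdiff D).mono fun C hC => (mem_filter.1 hC).2)
  obtain ⟨hCt, hDC⟩ := mem_filter.1 hC
  obtain ⟨hCI, hCcard⟩ := mem_interk.1 hCt
  obtain ⟨A, hA, B, hB, rfl⟩ := mem_intersections.1 hCI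
  refine mem_interk.2 ⟨mem_intersections.2 ⟨A \ D,
    mem_link.2 ⟨A, hA, hDC.trans inter_subset_left, rfl⟩,
    B \ D, mem_link.2 ⟨B, hB, hDC.trans inter_subset_right, rfl⟩, inf_sdiff.symm⟩, ?_⟩
  rw [card_sdiff_of_subset hDC]
  omega

theorem card_filter_superset_ksets_le (E : Finset ℕ) (m : ℕ) :
    #{D ∈ ksets n m | E ⊆ D} ≤ n.choose (m - #E) := by
  rw [← card_ksets]
  refine card_le_card_of_injOn (· \ E) (fun D hD => ?_)
    ((superset_injOn_sdiff E).mono fun D hD => (mem_filter.1 hD).2)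
  obtain ⟨hDm, hED⟩ := mem_filter.1 hD
  obtain ⟨hDn, hDcard⟩ := mem_ksets.1 hDm
  exact mem_ksets.2 ⟨sdiff_subset.trans hDn, by rw [card_sdiff_of_subset hED, hDcard]⟩

end Links

section Saturated

variable {n r : ℕ} {𝒜 : Finset (Finset ℕ)}

/-- A `t`-intersection outside this family contains a `(t - 1)`-set `D ∉ I(𝒜)`, whose link is
then intersecting. -/
def saturated (𝒜 : Finset (Finset ℕ)) (t : ℕ) : Finset (Finset ℕ) :=
  (interk 𝒜 t).filter fun C => ∀ y ∈ C, C.erase y ∈ intersections 𝒜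

theorem mem_saturated {t : ℕ} {C : Finset ℕ} :
    C ∈ saturated 𝒜 t ↔ C ∈ interk 𝒜 t ∧ ∀ y ∈ C, C.erase y ∈ intersections 𝒜 :=
  mem_filter

theorem saturated_one_eq_empty (hint : IsIntersecting 𝒜) : saturated 𝒜 1 = ∅ := by
  refine eq_empty_of_forall_notMem fun C hC => ?_
  obtain ⟨hC1, hsat⟩ := mem_saturated.1 hC
  obtain ⟨y, rfl⟩ := card_eq_one.1 (mem_interk.1 hC1).2
  obtain ⟨A, hA, B, hB, hAB⟩ := mem_intersections.1 (hsat y (mem_singleton_self y))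
  simpa [hAB] using hint A hA B hB

theorem card_interk_le_sum_link (h𝒜 : 𝒜 ⊆ ksets n r) {t : ℕ} (ht : 1 ≤ t) :
    #(interk 𝒜 t) ≤ ∑ D ∈ ksets n (t - 1) with D ∉ intersections 𝒜, #(interk (link 𝒜 D) 1) +
      #(saturated 𝒜 t) := by
  rw [← card_filter_add_card_filter_not (s := interk 𝒜 t)
    (fun C => ∀ y ∈ C, C.erase y ∈ intersections 𝒜), add_comm]
  refine Nat.add_le_add_right ?_ _
  have hcover : {C ∈ interk 𝒜 t | ¬ ∀ y ∈ C, C.erase y ∈ intersections 𝒜} ⊆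
      {D ∈ ksets n (t - 1) | D ∉ intersections 𝒜}.biUnion fun D => {C ∈ interk 𝒜 t | D ⊆ C} := by
    intro C hC
    obtain ⟨hCt, hnot⟩ := mem_filter.1 hC
    obtain ⟨y, hy, hyI⟩ := not_forall₂.1 hnot
    obtain ⟨hCn, hCcard⟩ := mem_ksets.1 (interk_subset_ksets h𝒜 t hCt)
    refine mem_biUnion.2 ⟨C.erase y, mem_filter.2 ⟨mem_ksets.2 ⟨(erase_subset y C).trans hCn, ?_⟩,
      hyI⟩, mem_filter.2 ⟨hCt, erase_subset y C⟩⟩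
    rw [card_erase_of_mem hy, hCcard]
  refine (card_le_card hcover).trans (card_biUnion_le.trans (sum_le_sum fun D hD => ?_))
  exact card_filter_superset_interk_le (by rw [(mem_ksets.1 (mem_filter.1 hD).1).2]; omega)

theorem card_interk_le (h𝒜 : 𝒜 ⊆ ksets n r) {t : ℕ} (ht : 1 ≤ t) :
    #(interk 𝒜 t) ≤ n.choose (t - 1) * alpha (r - (t - 1)) + #(saturated 𝒜 t) := by
  refine (card_interk_le_sum_link h𝒜 ht).trans (Nat.add_le_add_right ?_ _)
  calc ∑ D ∈ ksets n (t - 1) with D ∉ intersections 𝒜, #(interk (link 𝒜 D) 1)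
      ≤ ∑ D ∈ ksets n (t - 1) with D ∉ intersections 𝒜, alpha (r - (t - 1)) := by
        refine sum_le_sum fun D hD => ?_
        obtain ⟨hDk, hDI⟩ := mem_filter.1 hD
        simpa [(mem_ksets.1 hDk).2] using card_interk_link_le_alpha h𝒜 hDI
    _ ≤ n.choose (t - 1) * alpha (r - (t - 1)) := by
        rw [sum_const, smul_eq_mul, ← card_ksets]
        exact Nat.mul_le_mul_right _ (card_filter_le _ _)

theorem card_filter_superset_saturated_le (h𝒜 : 𝒜 ⊆ ksets n r) {t : ℕ} {D : Finset ℕ}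
    (hD : D ∈ interk 𝒜 t) (hDsat : D ∉ saturated 𝒜 t) :
    #{C ∈ saturated 𝒜 (t + 1) | D ⊆ C} ≤ alpha (r - (t - 1)) := by
  obtain ⟨z, hz, hzI⟩ := not_forall₂.1 fun h => hDsat (mem_saturated.2 ⟨hD, h⟩)
  have hDcard : #D = t := (mem_interk.1 hD).2
  have herase : #(D.erase z) = t - 1 := by rw [card_erase_of_mem hz, hDcard]
  calc #{C ∈ saturated 𝒜 (t + 1) | D ⊆ C} ≤ #{C ∈ interk 𝒜 t | D.erase z ⊆ C} := by
        refine card_le_card_of_injOn (·.erase z) (fun C hC => ?_)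
          ((erase_injOn' z).mono fun C hC => (mem_filter.1 hC).2 hz)
        obtain ⟨hCsat, hDC⟩ := mem_filter.1 hC
        obtain ⟨hCt, hCI⟩ := mem_saturated.1 hCsat
        refine mem_filter.2 ⟨mem_interk.2 ⟨hCI z (hDC hz), ?_⟩, erase_subset_erase z hDC⟩
        rw [card_erase_of_mem (hDC hz), (mem_interk.1 hCt).2, Nat.add_sub_cancel]
    _ ≤ #(interk (link 𝒜 (D.erase z)) 1) :=
        card_filter_superset_interk_le (by rw [herase]; have := card_pos.2 ⟨z, hz⟩; omega)
    _ ≤ alpha (r - (t - 1)) := herase ▸ card_interk_link_le_alpha h𝒜 hzI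

theorem card_saturated_succ_le (h𝒜 : 𝒜 ⊆ ksets n r) (t : ℕ) :
    #(saturated 𝒜 (t + 1)) ≤ #(interk 𝒜 t) * alpha (r - (t - 1)) + #(saturated 𝒜 t) * n := by
  have hcover : saturated 𝒜 (t + 1) ⊆
      (interk 𝒜 t).biUnion fun D => {C ∈ saturated 𝒜 (t + 1) | D ⊆ C} := by
    intro C hC
    obtain ⟨hCt, hCI⟩ := mem_saturated.1 hC
    obtain ⟨y, hy⟩ := card_pos.1 (by rw [(mem_interk.1 hCt).2]; omega)
    refine mem_biUnion.2
      ⟨C.erase y, mem_interk.2 ⟨hCI y hy, ?_⟩, mem_filter.2 ⟨hC, erase_subset y C⟩⟩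
    rw [card_erase_of_mem hy, (mem_interk.1 hCt).2, Nat.add_sub_cancel]
  refine (card_le_card hcover).trans (card_biUnion_le.trans ?_)
  rw [← sum_filter_add_sum_filter_not _ fun D => ∀ y ∈ D, D.erase y ∈ intersections 𝒜, add_comm]
  refine Nat.add_le_add ?_ ?_
  · calc _ ≤ ∑ D ∈ interk 𝒜 t with ¬ ∀ y ∈ D, D.erase y ∈ intersections 𝒜, alpha (r - (t - 1)) :=
          sum_le_sum fun D hD => card_filter_superset_saturated_le h𝒜 (mem_filter.1 hD).1
            fun h => (mem_filter.1 hD).2 (mem_saturated.1 h).2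
      _ ≤ #(interk 𝒜 t) * alpha (r - (t - 1)) := by
          rw [sum_const, smul_eq_mul]
          exact Nat.mul_le_mul_right _ (card_filter_le _ _)
  · refine (sum_le_sum fun D hD => ?_).trans (by rw [sum_const, smul_eq_mul]; rfl)
    have hDt : D ∈ ksets n t := interk_subset_ksets h𝒜 t (mem_filter.1 hD).1
    calc #{C ∈ saturated 𝒜 (t + 1) | D ⊆ C} ≤ #{C ∈ ksets n (t + 1) | D ⊆ C} :=
          card_le_card (filter_subset_filter _
            ((filter_subset _ _).trans (interk_subset_ksets h𝒜 (t + 1))))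
      _ ≤ n := by
          have := card_filter_superset_ksets_le (n := n) D (t + 1)
          rwa [(mem_ksets.1 hDt).2, Nat.add_sub_cancel_left, Nat.choose_one_right] at this

end Saturated

section Bounds

variable {r t : ℕ} {c c' : ℝ}

/-- With integer exponents the bound `c / n` on `saturated 𝒜 1 = ∅` fits the same pattern. -/
def HasIntersectionBounds (r t : ℕ) (c : ℝ) : Prop :=
  ∀ n, 1 ≤ n → ∀ 𝒜 ⊆ ksets n r, IsIntersecting 𝒜 →
    (#(interk 𝒜 t) : ℝ) ≤ c * n ^ ((t : ℤ) - 1) ∧ (#(saturated 𝒜 t) : ℝ) ≤ c * n ^ ((t : ℤ) - 2)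

theorem HasIntersectionBounds.mono (h : HasIntersectionBounds r t c) (hcc' : c ≤ c') :
    HasIntersectionBounds r t c' := by
  intro n hn 𝒜 h𝒜 hint
  have hpow : ∀ e : ℤ, (0 : ℝ) ≤ (n : ℝ) ^ e := zpow_nonneg (Nat.cast_nonneg n)
  obtain ⟨h1, h2⟩ := h n hn 𝒜 h𝒜 hint
  exact ⟨h1.trans (mul_le_mul_of_nonneg_right hcc' (hpow _)),
    h2.trans (mul_le_mul_of_nonneg_right hcc' (hpow _))⟩

theorem hasIntersectionBounds_one (r : ℕ) : HasIntersectionBounds r 1 (alpha r) := by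
  intro n hn 𝒜 h𝒜 hint
  refine ⟨by simpa using card_interk_one_le_alpha h𝒜 hint, ?_⟩
  rw [saturated_one_eq_empty hint, card_empty, Nat.cast_zero]
  positivity

theorem HasIntersectionBounds.succ (h : HasIntersectionBounds r t c) (hc : 0 ≤ c) :
    HasIntersectionBounds r (t + 1) (alpha (r - t) + c * (alpha (r - (t - 1)) + 1)) := by
  intro n hn 𝒜 h𝒜 hint
  obtain ⟨hI, hS⟩ := h n hn 𝒜 h𝒜 hint
  have hx : (1 : ℝ) ≤ n := Nat.one_le_cast.2 hn
  have hshift : (n : ℝ) ^ ((t : ℤ) - 2) * n = (n : ℝ) ^ ((t : ℤ) - 1) := by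
    rw [← zpow_add_one₀ (by positivity)]; ring_nf
  have hpow : (n : ℝ) ^ ((t : ℤ) - 1) ≤ (n : ℝ) ^ (t : ℤ) := zpow_le_zpow_right₀ hx (by omega)
  have hsat : (#(saturated 𝒜 (t + 1)) : ℝ) ≤
      c * (alpha (r - (t - 1)) + 1) * (n : ℝ) ^ ((t : ℤ) - 1) :=
    calc (#(saturated 𝒜 (t + 1)) : ℝ)
        ≤ #(interk 𝒜 t) * alpha (r - (t - 1)) + #(saturated 𝒜 t) * n := by
          exact_mod_cast card_saturated_succ_le h𝒜 t
      _ ≤ c * (n : ℝ) ^ ((t : ℤ) - 1) * alpha (r - (t - 1)) + c * (n : ℝ) ^ ((t : ℤ) - 2) * n := by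
          gcongr
      _ = c * (alpha (r - (t - 1)) + 1) * (n : ℝ) ^ ((t : ℤ) - 1) := by
          linear_combination c * hshift
  have hint' : (#(interk 𝒜 (t + 1)) : ℝ) ≤ n.choose t * alpha (r - t) + #(saturated 𝒜 (t + 1)) := by
    exact_mod_cast card_interk_le h𝒜 (Nat.le_add_left 1 t)
  have hchoose : (n.choose t : ℝ) ≤ (n : ℝ) ^ (t : ℤ) := by
    rw [zpow_natCast]; exact_mod_cast Nat.choose_le_pow n t
  have hc' : 0 ≤ c * (alpha (r - (t - 1)) + 1) := by positivity
  push_cast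
  constructor
  · calc (#(interk 𝒜 (t + 1)) : ℝ)
        ≤ (n : ℝ) ^ (t : ℤ) * alpha (r - t) + c * (alpha (r - (t - 1)) + 1) * (n : ℝ) ^ (t : ℤ) :=
          hint'.trans (add_le_add (by gcongr) (hsat.trans (by gcongr)))
      _ = _ := by ring_nf
  · calc (#(saturated 𝒜 (t + 1)) : ℝ) ≤ c * (alpha (r - (t - 1)) + 1) * (n : ℝ) ^ ((t : ℤ) - 1) :=
          hsat
      _ ≤ _ := by
          rw [show (t : ℤ) + 1 - 2 = t - 1 by ring]
          gcongr
          exact le_add_of_nonneg_left (Nat.cast_nonneg _)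

theorem exists_hasIntersectionBounds (r T : ℕ) :
    ∃ c : ℝ, 0 ≤ c ∧ ∀ t, 1 ≤ t → t ≤ T → HasIntersectionBounds r t c := by
  induction T with
  | zero => exact ⟨0, le_rfl, fun t ht1 ht2 => absurd ht2 (by omega)⟩
  | succ T ih =>
    obtain ⟨c, hc, hT⟩ := ih
    have hα : ∀ s, (0 : ℝ) ≤ alpha s := fun s => Nat.cast_nonneg _
    have hcT := mul_nonneg hc (hα (r - (T - 1)))
    refine ⟨alpha r + (alpha (r - T) + c * (alpha (r - (T - 1)) + 1)), by positivity,
      fun t ht1 ht2 => ?_⟩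
    rcases Nat.lt_or_ge t (T + 1) with htT | htT
    · exact (hT t ht1 (by omega)).mono (by nlinarith [hα r, hα (r - T)])
    obtain rfl : t = T + 1 := by omega
    rcases Nat.eq_zero_or_pos T with rfl | hT1
    · exact (hasIntersectionBounds_one r).mono (by nlinarith [hα (r - 0)])
    · exact ((hT T hT1 le_rfl).succ hc).mono (by nlinarith [hα r])

end Bounds

section Counting

variable {n r : ℕ} {𝒜 : Finset (Finset ℕ)}

theorem exists_inter_subset_of_not_subset (hint : IsIntersecting 𝒜)
    (hmax : ∀ B ∈ ksets n r, B ∉ 𝒜 → ∃ A ∈ 𝒜, A ∩ B = ∅) {D : Finset ℕ}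
    (hD : ¬ {B ∈ ksets n r | ∃ C ∈ link 𝒜 D, C ⊆ B} ⊆ 𝒜) :
    ∃ E ∈ intersections 𝒜, E.Nonempty ∧ E ⊆ D := by
  obtain ⟨B, hB, hB𝒜⟩ := not_subset.1 hD
  obtain ⟨hBr, C, hC, hCB⟩ := mem_filter.1 hB
  obtain ⟨A, hA, hDA, rfl⟩ := mem_link.1 hC
  obtain ⟨A', hA', hA'B⟩ := hmax B hBr hB𝒜
  refine ⟨A' ∩ A, mem_intersections.2 ⟨A', hA', A, hA, rfl⟩, hint A' hA' A hA, fun x hx => ?_⟩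
  by_contra hxD
  have : x ∈ A' ∩ B :=
    mem_inter.2 ⟨(mem_inter.1 hx).1, hCB (mem_sdiff.2 ⟨(mem_inter.1 hx).2, hxD⟩)⟩
  simp [hA'B] at this

theorem card_filter_exists_inter_subset_le (m : ℕ) :
    #{D ∈ ksets n m | ∃ E ∈ intersections 𝒜, E.Nonempty ∧ E ⊆ D} ≤
      ∑ j ∈ Icc 1 m, #(interk 𝒜 j) * n.choose (m - j) := by
  have hcover : {D ∈ ksets n m | ∃ E ∈ intersections 𝒜, E.Nonempty ∧ E ⊆ D} ⊆
      (Icc 1 m).biUnion fun j => (interk 𝒜 j).biUnion fun E => {D ∈ ksets n m | E ⊆ D} := by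
    intro D hD
    obtain ⟨hDm, E, hE, hEne, hED⟩ := mem_filter.1 hD
    have hEm : #E ≤ m := (mem_ksets.1 hDm).2 ▸ card_le_card hED
    exact mem_biUnion.2 ⟨#E, mem_Icc.2 ⟨card_pos.2 hEne, hEm⟩,
      mem_biUnion.2 ⟨E, mem_interk.2 ⟨hE, rfl⟩, mem_filter.2 ⟨hDm, hED⟩⟩⟩
  refine (card_le_card hcover).trans (card_biUnion_le.trans (sum_le_sum fun j hj => ?_))
  calc #((interk 𝒜 j).biUnion fun E => {D ∈ ksets n m | E ⊆ D})
      ≤ ∑ E ∈ interk 𝒜 j, n.choose (m - j) := card_biUnion_le.trans <| sum_le_sum fun E hE =>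
        (mem_interk.1 hE).2 ▸ card_filter_superset_ksets_le E m
    _ = #(interk 𝒜 j) * n.choose (m - j) := by rw [sum_const, smul_eq_mul]

theorem card_interk_le_of_full_links (h𝒜 : 𝒜 ⊆ ksets n r) {k : ℕ} (hk : 1 ≤ k)
    (hfull : ∀ D ∈ ksets n (k - 1), D ∉ intersections 𝒜 →
      #(interk (link 𝒜 D) 1) = alpha (r - (k - 1)) →
      ∃ E ∈ intersections 𝒜, E.Nonempty ∧ E ⊆ D) :
    #(interk 𝒜 k) ≤ (alpha (r - (k - 1)) - 1) * n.choose (k - 1) +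
      ∑ j ∈ Icc 1 (k - 1), #(interk 𝒜 j) * n.choose (k - 1 - j) + #(saturated 𝒜 k) := by
  refine (card_interk_le_sum_link h𝒜 hk).trans (Nat.add_le_add_right ?_ _)
  set P : Finset ℕ → Prop := fun D => ∃ E ∈ intersections 𝒜, E.Nonempty ∧ E ⊆ D
  calc ∑ D ∈ ksets n (k - 1) with D ∉ intersections 𝒜, #(interk (link 𝒜 D) 1)
      ≤ ∑ D ∈ ksets n (k - 1) with D ∉ intersections 𝒜,
          ((alpha (r - (k - 1)) - 1) + if P D then 1 else 0) := by
        refine sum_le_sum fun D hD => ?_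
        obtain ⟨hDk, hDI⟩ := mem_filter.1 hD
        have hle := card_interk_link_le_alpha h𝒜 hDI
        rw [(mem_ksets.1 hDk).2] at hle
        by_cases hval : #(interk (link 𝒜 D) 1) = alpha (r - (k - 1))
        · rw [if_pos (hfull D hDk hDI hval)]; omega
        · split_ifs <;> omega
    _ ≤ (alpha (r - (k - 1)) - 1) * n.choose (k - 1) + #{D ∈ ksets n (k - 1) | P D} := by
        rw [sum_add_distrib, sum_const, smul_eq_mul, ← card_filter, filter_filter, mul_comm]
        gcongr
        · exact (card_filter_le _ _).trans (card_ksets n (k - 1)).le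
        · exact fun h => h.2
    _ ≤ _ := Nat.add_le_add_left (card_filter_exists_inter_subset_le (k - 1)) _

theorem sum_card_interk_mul_choose_le {m : ℕ} (hn : 1 ≤ n) {c : ℝ}
    (hI : ∀ j ∈ Icc 1 m, (#(interk 𝒜 j) : ℝ) ≤ c * n ^ ((j : ℤ) - 1)) :
    ((∑ j ∈ Icc 1 m, #(interk 𝒜 j) * n.choose (m - j) : ℕ) : ℝ) ≤ m * c * n ^ ((m : ℤ) - 1) := by
  have hn0 : (n : ℝ) ≠ 0 := by positivity
  push_cast
  calc ∑ j ∈ Icc 1 m, (#(interk 𝒜 j) : ℝ) * n.choose (m - j)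
      ≤ ∑ j ∈ Icc 1 m, c * (n : ℝ) ^ ((m : ℤ) - 1) := by
        refine sum_le_sum fun j hj => ?_
        have hjm := (mem_Icc.1 hj).2
        calc (#(interk 𝒜 j) : ℝ) * n.choose (m - j)
            ≤ c * (n : ℝ) ^ ((j : ℤ) - 1) * (n : ℝ) ^ (m - j) :=
              mul_le_mul (hI j hj) (by exact_mod_cast Nat.choose_le_pow n (m - j))
                (Nat.cast_nonneg _) ((Nat.cast_nonneg _).trans (hI j hj))
          _ = c * (n : ℝ) ^ ((m : ℤ) - 1) := by
              rw [mul_assoc, ← zpow_natCast, ← zpow_add₀ hn0]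
              congr 2
              push_cast [Nat.cast_sub hjm]
              ring
    _ = m * c * n ^ ((m : ℤ) - 1) := by rw [sum_const, Nat.card_Icc]; simp [mul_assoc]

end Counting

/-- Lemma 2: for `n` large, every maximal intersecting `𝒜 ⊆ [n]^(r)` either has few
`k`-intersections, or there is `D ∈ [n]^(k-1)` such that `𝒞 = {A \ D : D ⊆ A ∈ 𝒜}` satisfies
`𝒞 ⊆ [n]^(r-k+1)`, `|𝒞⟨1⟩| = α^(r-k+1)`, and every `r`-set containing a member of `𝒞` is in `𝒜`. -/
theorem stmt_5 (k r : ℕ) (hk : 1 ≤ k) (hkr : k ≤ r) :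
    ∃ c : ℝ, 0 < c ∧ ∃ n₀ : ℕ, ∀ n, n₀ ≤ n →
      ∀ 𝒜 ⊆ ksets n r, IsIntersecting 𝒜 →
      (∀ B ∈ ksets n r, B ∉ 𝒜 → ∃ A ∈ 𝒜, A ∩ B = ∅) →
      (((interk 𝒜 k).card : ℝ) ≤
          ((alpha (r - k + 1) : ℝ) - 1) * (n.choose (k - 1) : ℝ) +
            c * (n : ℝ) ^ ((k : ℤ) - 2)) ∨
      ∃ D ∈ ksets n (k - 1),
        ((𝒜.filter fun A => D ⊆ A).image fun A => A \ D) ⊆ ksets n (r - k + 1) ∧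
        (interPts ((𝒜.filter fun A => D ⊆ A).image fun A => A \ D)).card =
          alpha (r - k + 1) ∧
        ((ksets n r).filter fun B =>
            ∃ C ∈ (𝒜.filter fun A => D ⊆ A).image fun A => A \ D, C ⊆ B) ⊆ 𝒜 := by
  obtain ⟨c, hc, hbounds⟩ := exists_hasIntersectionBounds r k
  refine ⟨k * c + 1, by positivity, 1, fun n hn 𝒜 h𝒜 hint hmax =>
    or_iff_not_imp_right.2 fun hcovered => ?_⟩
  have hs : r - k + 1 = r - (k - 1) := by omega
  have hcount := card_interk_le_of_full_links h𝒜 hk fun D hD hDI hfull =>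
    exists_inter_subset_of_not_subset hint hmax fun hsub => hcovered ⟨D, hD,
      by rw [hs, ← (mem_ksets.1 hD).2]; exact link_subset_ksets h𝒜 D,
      (card_interPts (link 𝒜 D)).trans (hs ▸ hfull), hsub⟩
  have hfree := sum_card_interk_mul_choose_le (𝒜 := 𝒜) (m := k - 1) hn fun j hj =>
    (hbounds j (mem_Icc.1 hj).1 (by have := (mem_Icc.1 hj).2; omega) n hn 𝒜 h𝒜 hint).1
  have hsat := (hbounds k hk le_rfl n hn 𝒜 h𝒜 hint).2
  rw [show ((k - 1 : ℕ) : ℤ) - 1 = (k : ℤ) - 2 by omega, Nat.cast_sub hk, Nat.cast_one] at hfree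
  have hα : ((alpha (r - (k - 1)) - 1 : ℕ) : ℝ) = alpha (r - (k - 1)) - 1 := by
    rw [Nat.cast_sub (one_le_alpha (by omega)), Nat.cast_one]
  have hcount' : (#(interk 𝒜 k) : ℝ) ≤ ((alpha (r - (k - 1)) : ℝ) - 1) * n.choose (k - 1) +
      ((∑ j ∈ Icc 1 (k - 1), #(interk 𝒜 j) * n.choose (k - 1 - j) : ℕ) : ℝ) +
      #(saturated 𝒜 k) := by
    rw [← hα]; exact_mod_cast hcount
  have hpow : (0 : ℝ) ≤ (n : ℝ) ^ ((k : ℤ) - 2) := by positivity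
  rw [hs]
  nlinarith
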